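/- Using Ĉ^2 = -3, Ĉ·G = 1, G^2 = -1/6, define vol(u,v) piecewise: for u∈[0,1], vol(u,v) = ((2-u)Ĉ + (12-6u-v)G)^2 = -3(2-u)^2 + 2(2-u)(12-6u-v) - (12-6u-v)^2/6 for v∈[0,6-3u], and vol(u,v) = (12-6u-v)^2·((1/3)Ĉ+G)^2 = (12-6u-v)^2/6 for v∈[6-3u,12-6u]; for u∈[1,4/3], vol(u,v) = -3(4-3u)^2 + 2(4-3u)(24-18u-v) - (24-18u-v)^2/6 for v∈[0,12-9u], and vol(u,v) = (8-6u-v/3)^2·(Ĉ+3G)^2 = (24-18u-v)^2/6 (using (Ĉ+3G)^2 = 3/2) for v∈[12-9u,24-18u]. Then (3/22) ∫_0^{4/3} ∫_0^∞ vol(u,v) dv du = 207/44. -/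
import Mathlib
open MeasureTheory intervalIntegral

noncomputable def vol13 (u v : ℝ) : ℝ :=
  if 0 ≤ u ∧ u ≤ 1 then
    (if 0 ≤ v ∧ v ≤ 6 - 3*u then
       -3*(2-u)^2 + 2*(2-u)*(12-6*u-v) - (12-6*u-v)^2/6
     else if 6 - 3*u ≤ v ∧ v ≤ 12 - 6*u then (12-6*u-v)^2/6
     else 0)
  else if 1 ≤ u ∧ u ≤ 4/3 then
    (if 0 ≤ v ∧ v ≤ 12 - 9*u then
       -3*(4-3*u)^2 + 2*(4-3*u)*(24-18*u-v) - (24-18*u-v)^2/6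
     else if 12 - 9*u ≤ v ∧ v ≤ 24 - 18*u then (8 - 6*u - v/3)^2 * (3/2)
     else 0)
  else 0

lemma integral_cubic (c0 c1 c2 c3 a b : ℝ) :
    (∫ x in a..b, (c0 + c1*x + c2*x^2 + c3*x^3)) =
      (c0*b + c1*b^2/2 + (c2*b^3/3 + c3*b^4/4)) - (c0*a + c1*a^2/2 + (c2*a^3/3 + c3*a^4/4)) := by
  have h : ∀ x ∈ Set.uIcc a b,
      HasDerivAt (fun x : ℝ => c0*x + c1*x^2/2 + (c2*x^3/3 + c3*x^4/4))
        (c0 + c1*x + c2*x^2 + c3*x^3) x := by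
    intro x _
    have h1 : HasDerivAt (fun x : ℝ => c0*x + c1*x^2/2 + (c2*x^3/3 + c3*x^4/4))
        (c0*1 + c1*((2:ℕ)*x^(2-1))/2 + (c2*((3:ℕ)*x^(3-1))/3 + c3*((4:ℕ)*x^(4-1))/4)) x :=
      ((hasDerivAt_id' x).const_mul c0).add
        ((((hasDerivAt_pow 2 x).const_mul c1).div_const 2)) |>.add
        ((((hasDerivAt_pow 3 x).const_mul c2).div_const 3).add
          (((hasDerivAt_pow 4 x).const_mul c3).div_const 4))
    convert h1 using 1
    push_cast; ring
  exact integral_eq_sub_of_hasDerivAt h (Continuous.intervalIntegrable (by continuity) a b)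

noncomputable def gaux1 (u v : ℝ) : ℝ :=
  if v ≤ 6 - 3*u then -3*(2-u)^2 + 2*(2-u)*(12-6*u-v) - (12-6*u-v)^2/6
  else (12-6*u-v)^2/6

lemma inner1 (u : ℝ) (hu0 : 0 ≤ u) (hu1 : u ≤ 1) :
    (∫ v in Set.Ioi (0:ℝ), vol13 u v) = 72 - 108*u + 54*u^2 - 9*u^3 := by
  have hA0 : (0:ℝ) ≤ 6 - 3*u := by linarith
  have hAT : (6 - 3*u : ℝ) ≤ 12 - 6*u := by linarith
  have hT0 : (0:ℝ) ≤ 12 - 6*u := by linarith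
  have hstep : (∫ v in Set.Ioi (0:ℝ), vol13 u v)
      = ∫ v in Set.Ioi (0:ℝ), (Set.Ioc (0:ℝ) (12-6*u)).indicator (gaux1 u) v := by
    apply setIntegral_congr_fun measurableSet_Ioi
    intro v hv
    simp only [Set.mem_Ioi] at hv
    rw [vol13, if_pos ⟨hu0, hu1⟩]
    by_cases hva : v ≤ 6 - 3*u
    · rw [if_pos (show (0:ℝ) ≤ v ∧ v ≤ 6 - 3*u from ⟨hv.le, hva⟩),
        Set.indicator_of_mem (show v ∈ Set.Ioc (0:ℝ) (12-6*u) from ⟨hv, hva.trans hAT⟩),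
        gaux1, if_pos hva]
    · by_cases hvt : v ≤ 12 - 6*u
      · rw [if_neg (by tauto), if_pos (show (6-3*u:ℝ) ≤ v ∧ v ≤ 12-6*u from ⟨le_of_not_ge hva, hvt⟩),
          Set.indicator_of_mem (show v ∈ Set.Ioc (0:ℝ) (12-6*u) from ⟨hv, hvt⟩), gaux1, if_neg hva]
      · rw [if_neg (by tauto), if_neg (by tauto),
          Set.indicator_of_notMem (by simp only [Set.mem_Ioc, not_and]; intro; linarith)]
  rw [hstep, setIntegral_indicator measurableSet_Ioc,
    Set.inter_eq_self_of_subset_right Set.Ioc_subset_Ioi_self,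
    ← intervalIntegral.integral_of_le hT0]
  have hi1 : IntervalIntegrable (gaux1 u) volume 0 (6-3*u) := by
    rw [intervalIntegrable_iff, Set.uIoc_of_le hA0]
    have c1 : IntegrableOn (fun v : ℝ => -3*(2-u)^2 + 2*(2-u)*(12-6*u-v) - (12-6*u-v)^2/6)
        (Set.Ioc 0 (6-3*u)) volume := (by continuity : Continuous _).integrableOn_Ioc
    exact c1.congr_fun (fun v hv => by rw [gaux1, if_pos hv.2]) measurableSet_Ioc
  have hi2 : IntervalIntegrable (gaux1 u) volume (6-3*u) (12-6*u) := by
    rw [intervalIntegrable_iff, Set.uIoc_of_le hAT]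
    have c2 : IntegrableOn (fun v : ℝ => (12-6*u-v)^2/6) (Set.Ioc (6-3*u) (12-6*u)) volume :=
      (by continuity : Continuous _).integrableOn_Ioc
    exact c2.congr_fun (fun v hv => by rw [gaux1, if_neg (not_le.mpr hv.1)]) measurableSet_Ioc
  rw [← intervalIntegral.integral_add_adjacent_intervals hi1 hi2]
  have e1 : (∫ v in (0:ℝ)..(6-3*u), gaux1 u v)
      = ∫ v in (0:ℝ)..(6-3*u), ((-3*(2-u)^2 + 2*(2-u)*(12-6*u) - (12-6*u)^2/6)
          + (-2*(2-u)+(12-6*u)/3)*v + (-1/6)*v^2 + 0*v^3) := by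
    apply intervalIntegral.integral_congr
    intro v hv
    rw [Set.uIcc_of_le hA0] at hv
    rw [gaux1, if_pos hv.2]; ring
  have e2 : (∫ v in (6-3*u:ℝ)..(12-6*u), gaux1 u v)
      = ∫ v in (6-3*u:ℝ)..(12-6*u), (((12-6*u)^2/6) + (-(12-6*u)/3)*v + (1/6)*v^2 + 0*v^3) := by
    apply intervalIntegral.integral_congr
    intro v hv
    rw [Set.uIcc_of_le hAT] at hv
    rw [gaux1]
    rcases eq_or_lt_of_le hv.1 with h | h
    · rw [if_pos h.symm.le, ← h]; ring
    · rw [if_neg (not_le.mpr h)]; ring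
  rw [e1, e2, integral_cubic, integral_cubic]; ring

noncomputable def gaux2 (u v : ℝ) : ℝ :=
  if v ≤ 12 - 9*u then -3*(4-3*u)^2 + 2*(4-3*u)*(24-18*u-v) - (24-18*u-v)^2/6
  else (8 - 6*u - v/3)^2 * (3/2)

lemma inner2 (u : ℝ) (hu0 : 1 < u) (hu1 : u ≤ 4/3) :
    (∫ v in Set.Ioi (0:ℝ), vol13 u v) = 576 - 1296*u + 972*u^2 - 243*u^3 := by
  have hA0 : (0:ℝ) ≤ 12 - 9*u := by linarith
  have hAT : (12 - 9*u : ℝ) ≤ 24 - 18*u := by linarith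
  have hT0 : (0:ℝ) ≤ 24 - 18*u := by linarith
  have hstep : (∫ v in Set.Ioi (0:ℝ), vol13 u v)
      = ∫ v in Set.Ioi (0:ℝ), (Set.Ioc (0:ℝ) (24-18*u)).indicator (gaux2 u) v := by
    apply setIntegral_congr_fun measurableSet_Ioi
    intro v hv
    simp only [Set.mem_Ioi] at hv
    rw [vol13, if_neg (by push_neg; intro; linarith),
      if_pos (show (1:ℝ) ≤ u ∧ u ≤ 4/3 from ⟨hu0.le, hu1⟩)]
    by_cases hva : v ≤ 12 - 9*u
    · rw [if_pos (show (0:ℝ) ≤ v ∧ v ≤ 12 - 9*u from ⟨hv.le, hva⟩),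
        Set.indicator_of_mem (show v ∈ Set.Ioc (0:ℝ) (24-18*u) from ⟨hv, hva.trans hAT⟩),
        gaux2, if_pos hva]
    · by_cases hvt : v ≤ 24 - 18*u
      · rw [if_neg (by tauto), if_pos (show (12-9*u:ℝ) ≤ v ∧ v ≤ 24-18*u from ⟨le_of_not_ge hva, hvt⟩),
          Set.indicator_of_mem (show v ∈ Set.Ioc (0:ℝ) (24-18*u) from ⟨hv, hvt⟩), gaux2, if_neg hva]
      · rw [if_neg (by tauto), if_neg (by tauto),
          Set.indicator_of_notMem (by simp only [Set.mem_Ioc, not_and]; intro; linarith)]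
  rw [hstep, setIntegral_indicator measurableSet_Ioc,
    Set.inter_eq_self_of_subset_right Set.Ioc_subset_Ioi_self,
    ← intervalIntegral.integral_of_le hT0]
  have hi1 : IntervalIntegrable (gaux2 u) volume 0 (12-9*u) := by
    rw [intervalIntegrable_iff, Set.uIoc_of_le hA0]
    have c1 : IntegrableOn (fun v : ℝ => -3*(4-3*u)^2 + 2*(4-3*u)*(24-18*u-v) - (24-18*u-v)^2/6)
        (Set.Ioc 0 (12-9*u)) volume := (by continuity : Continuous _).integrableOn_Ioc
    exact c1.congr_fun (fun v hv => by rw [gaux2, if_pos hv.2]) measurableSet_Ioc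
  have hi2 : IntervalIntegrable (gaux2 u) volume (12-9*u) (24-18*u) := by
    rw [intervalIntegrable_iff, Set.uIoc_of_le hAT]
    have c2 : IntegrableOn (fun v : ℝ => (8 - 6*u - v/3)^2 * (3/2))
        (Set.Ioc (12-9*u) (24-18*u)) volume := (by continuity : Continuous _).integrableOn_Ioc
    exact c2.congr_fun (fun v hv => by rw [gaux2, if_neg (not_le.mpr hv.1)]) measurableSet_Ioc
  rw [← intervalIntegral.integral_add_adjacent_intervals hi1 hi2]
  have e1 : (∫ v in (0:ℝ)..(12-9*u), gaux2 u v)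
      = ∫ v in (0:ℝ)..(12-9*u), ((-3*(4-3*u)^2 + 2*(4-3*u)*(24-18*u) - (24-18*u)^2/6)
          + (-2*(4-3*u)+(24-18*u)/3)*v + (-1/6)*v^2 + 0*v^3) := by
    apply intervalIntegral.integral_congr
    intro v hv
    rw [Set.uIcc_of_le hA0] at hv
    rw [gaux2, if_pos hv.2]; ring
  have e2 : (∫ v in (12-9*u:ℝ)..(24-18*u), gaux2 u v)
      = ∫ v in (12-9*u:ℝ)..(24-18*u), ((3/2*(8-6*u)^2) + (-(8-6*u))*v + (1/6)*v^2 + 0*v^3) := by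
    apply intervalIntegral.integral_congr
    intro v hv
    rw [Set.uIcc_of_le hAT] at hv
    rw [gaux2]
    rcases eq_or_lt_of_le hv.1 with h | h
    · rw [if_pos h.symm.le, ← h]; ring
    · rw [if_neg (not_le.mpr h)]; ring
  rw [e1, e2, integral_cubic, integral_cubic]; ring

theorem stmt_13 :
    (3/22 : ℝ) * ∫ u in (0:ℝ)..(4/3), ∫ v in Set.Ioi (0:ℝ), vol13 u v = 207/44 := by
  have h01 : IntervalIntegrable (fun u => ∫ v in Set.Ioi (0:ℝ), vol13 u v) volume 0 1 := by
    rw [intervalIntegrable_iff, Set.uIoc_of_le (by norm_num : (0:ℝ) ≤ 1)]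
    have c1 : IntegrableOn (fun u : ℝ => 72 - 108*u + 54*u^2 - 9*u^3) (Set.Ioc 0 1) volume :=
      (by continuity : Continuous _).integrableOn_Ioc
    exact c1.congr_fun (fun u hu => (inner1 u hu.1.le hu.2).symm) measurableSet_Ioc
  have h12 : IntervalIntegrable (fun u => ∫ v in Set.Ioi (0:ℝ), vol13 u v) volume 1 (4/3) := by
    rw [intervalIntegrable_iff, Set.uIoc_of_le (by norm_num : (1:ℝ) ≤ 4/3)]
    have c2 : IntegrableOn (fun u : ℝ => 576 - 1296*u + 972*u^2 - 243*u^3) (Set.Ioc 1 (4/3)) volume :=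
      (by continuity : Continuous _).integrableOn_Ioc
    exact c2.congr_fun (fun u hu => (inner2 u hu.1 hu.2).symm) measurableSet_Ioc
  rw [← intervalIntegral.integral_add_adjacent_intervals h01 h12]
  have e1 : (∫ u in (0:ℝ)..1, ∫ v in Set.Ioi (0:ℝ), vol13 u v)
      = ∫ u in (0:ℝ)..1, (72 + (-108)*u + 54*u^2 + (-9)*u^3) := by
    apply intervalIntegral.integral_congr_ae
    filter_upwards with u hu
    rw [Set.uIoc_of_le (by norm_num : (0:ℝ) ≤ 1)] at hu
    rw [inner1 u hu.1.le hu.2]; ring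
  have e2 : (∫ u in (1:ℝ)..(4/3), ∫ v in Set.Ioi (0:ℝ), vol13 u v)
      = ∫ u in (1:ℝ)..(4/3), (576 + (-1296)*u + 972*u^2 + (-243)*u^3) := by
    apply intervalIntegral.integral_congr_ae
    filter_upwards with u hu
    rw [Set.uIoc_of_le (by norm_num : (1:ℝ) ≤ 4/3)] at hu
    rw [inner2 u hu.1 hu.2]; ring
  rw [e1, e2, integral_cubic, integral_cubic]
  norm_num
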